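/- Let a ∈ ℝ and b ∈ (0, 1/(2π)) with ρ(S_{a,b}) irrational, and let g : ℝ → ℝ be a real-analytic, strictly increasing map with g(x+1) = g(x) + 1 for all x, such that g(S_{a,b}(x)) − S_{a,b}(g(x)) ∈ ℤ for all x ∈ ℝ, and whose rotation number satisfies ρ(g) − k·ρ(S_{a,b}) ∈ ℤ for some k ∈ ℤ. Then the circle map induced by g equals the k-th iterate of the circle map induced by S_{a,b}: there exist m, n ∈ ℕ with (n : ℤ) − (m : ℤ) = k and j ∈ ℤ such that S_{a,b}^∘m(g(x)) = S_{a,b}^∘n(x) + j for all x ∈ ℝ. -/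

import Mathlib

/-!
The defect `g ∘ S - S ∘ g` is continuous and integer-valued, hence a constant `j`; then `g`
semiconjugates `S` to `S + j`, and comparing translation numbers forces `j = 0`, so `g` and `S`
commute. Choosing `m, n` with `n - m = k`, the commuting lifts `u = S^m ∘ g` and `v = S^n` have
translation numbers differing by the integer `j₀`, so `u x₀ = v x₀ + j₀` at some point `x₀`.
Commutation with `S` propagates this along the orbit of `x₀`, whose fractional parts are pairwise
distinct because `ρ(S)` is irrational. The `1`-periodic analytic function `u - v - j₀` therefore
has infinitely many zeros in `[0, 1]`, and vanishes identically.
-/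

open Filter Topology

/-- The Arnold family `S_{a,b}(x) = x + a + b sin(2πx)`. -/
noncomputable def S (a b : ℝ) : ℝ → ℝ :=
  fun x => x + a + b * Real.sin (2 * Real.pi * x)

open Function Set Real

theorem Continuous.apply_eq_apply_of_forall_exists_int {X : Type*} [TopologicalSpace X]
    [PreconnectedSpace X] {c : X → ℝ} (hc : Continuous c) (hint : ∀ x, ∃ j : ℤ, c x = j)
    (x y : X) : c x = c y :=
  isPreconnected_univ.constant_of_mapsTo
    Int.isClosedEmbedding_coe_real.isInducing.isDiscrete_range hc.continuousOn
    (fun z _ => (hint z).imp fun _ => Eq.symm) (mem_univ x) (mem_univ y)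

theorem AnalyticOnNhd.eqOn_zero_of_infinite_zeros {𝕜 E : Type*} [NontriviallyNormedField 𝕜]
    [NormedAddCommGroup E] [NormedSpace 𝕜 E] {f : 𝕜 → E} {U K : Set 𝕜}
    (hf : AnalyticOnNhd 𝕜 f U) (hU : IsPreconnected U) (hK : IsCompact K) (hKU : K ⊆ U)
    (hzero : {z ∈ K | f z = 0}.Infinite) : EqOn f 0 U := by
  obtain ⟨z, hzK, hz⟩ := hzero.exists_accPt_of_subset_isCompact hK (sep_subset _ _)
  exact hf.eqOn_zero_of_preconnected_of_frequently_eq_zero hU (hKU hzK)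
    ((accPt_iff_frequently_nhdsNE.1 hz).mono fun _ hw => hw.2)

namespace CircleDeg1Lift

theorem isUnit_of_continuous_of_injective {f : CircleDeg1Lift} (hc : Continuous f)
    (hi : Injective f) : IsUnit f :=
  isUnit_iff_bijective.2 ⟨hi, f.continuous_iff_surjective.1 hc⟩

theorem analyticOnNhd_pow {f : CircleDeg1Lift} (hf : AnalyticOnNhd ℝ f univ) :
    ∀ n : ℕ, AnalyticOnNhd ℝ ⇑(f ^ n) univ
  | 0 => by rw [pow_zero, coe_one]; exact analyticOnNhd_id
  | n + 1 => by
    rw [pow_succ', coe_mul]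
    exact hf.comp (analyticOnNhd_pow hf n) (mapsTo_univ _ _)

theorem commute_of_apply_eq_add_int {f g : CircleDeg1Lift} {j : ℤ}
    (h : ∀ x, g (f x) = f (g x) + j) : Commute g f := by
  set T : CircleDeg1Lift := ↑(translate (Multiplicative.ofAdd (j : ℝ)))
  have hT : Commute T f := commute_iff_commute.2 fun x => by
    simp only [T, translate_apply, map_int_add]
  have hτ : f.translationNumber = (T * f).translationNumber :=
    translationNumber_eq_of_semiconj (f := g) fun x => by
      simp only [T, h x, mul_apply, translate_apply, add_comm]
  rw [translationNumber_mul_of_commute hT, translationNumber_translate] at hτ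
  have hj : (j : ℝ) = 0 := by linarith
  exact commute_iff_commute.2 fun x => by simpa only [hj, add_zero] using h x

theorem exists_apply_eq_add_int_of_commute {u v : CircleDeg1Lift} (hu : Continuous u)
    (hv : IsUnit v) (huv : Commute u v) {j : ℤ}
    (hτ : u.translationNumber = v.translationNumber + j) :
    ∃ x, u x = v x + j := by
  obtain ⟨w, rfl⟩ := hv
  have hw : Continuous ⇑(↑w⁻¹ : CircleDeg1Lift) :=
    (continuous_iff_surjective _).2 (isUnit_iff_bijective.1 (w⁻¹).isUnit).2
  have hτΦ : (u * ↑w⁻¹).translationNumber = j := by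
    rw [translationNumber_mul_of_commute huv.units_inv_right, translationNumber_units_inv, hτ]
    ring
  obtain ⟨y, hy⟩ := (u * ↑w⁻¹).exists_eq_add_translationNumber (hu.comp hw)
  refine ⟨(↑w⁻¹ : CircleDeg1Lift) y, ?_⟩
  rw [units_apply_inv_apply, ← mul_apply, hy, hτΦ]

theorem injective_fract_pow_apply {f : CircleDeg1Lift} (hf : Irrational f.translationNumber)
    (x : ℝ) :
    Injective fun n : ℕ => Int.fract ((f ^ n) x) := by
  intro p q hpq
  wlog hlt : p < q generalizing p q
  · rcases (not_lt.1 hlt).lt_or_eq with h | h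
    · exact (this hpq.symm h).symm
    · exact h.symm
  exfalso
  obtain ⟨d, hd⟩ := Int.fract_eq_fract.1 hpq.symm
  have h : (f ^ (q - p)) ((f ^ p) x) = (f ^ p) x + d := by
    rw [← mul_apply, ← pow_add, Nat.sub_add_cancel hlt.le]
    linarith
  have hτ := translationNumber_of_map_pow_eq_add_int _ h (Nat.sub_pos_of_lt hlt)
  exact hf ⟨d / (q - p : ℕ), by rw [hτ]; push_cast; ring⟩

theorem apply_eq_add_int_of_commute_of_analyticOnNhd {f u v : CircleDeg1Lift}
    (hf : Irrational f.translationNumber) (hu : Commute f u) (hv : Commute f v)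
    (hua : AnalyticOnNhd ℝ u univ) (hva : AnalyticOnNhd ℝ v univ) {x₀ : ℝ} {j : ℤ}
    (h₀ : u x₀ = v x₀ + j) (x : ℝ) : u x = v x + j := by
  set φ : ℝ → ℝ := fun y => u y - v y - j
  have hφ_fract (y : ℝ) : φ (Int.fract y) = φ y := by
    simp only [φ, Int.fract, map_sub_int]
    ring
  have hφ_orbit (n : ℕ) : φ ((f ^ n) x₀) = 0 := by
    simp only [φ, ← commute_iff_commute.1 (hu.pow_left n) x₀,
      ← commute_iff_commute.1 (hv.pow_left n) x₀, h₀, map_add_int]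
    ring
  have hzero : {z ∈ Icc (0 : ℝ) 1 | φ z = 0}.Infinite := by
    refine (infinite_range_of_injective (injective_fract_pow_apply hf x₀)).mono ?_
    rintro _ ⟨n, rfl⟩
    exact ⟨⟨Int.fract_nonneg _, (Int.fract_lt_one _).le⟩, (hφ_fract _).trans (hφ_orbit n)⟩
  have hφ := ((hua.sub hva).sub analyticOnNhd_const).eqOn_zero_of_infinite_zeros
    isPreconnected_univ isCompact_Icc (subset_univ _) hzero (mem_univ x)
  simp only [Pi.sub_apply, Pi.zero_apply] at hφ
  linarith

theorem exists_pow_mul_apply_eq_pow_apply_add_int {f g : CircleDeg1Lift} (hf : IsUnit f)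
    (hfa : AnalyticOnNhd ℝ f univ) (hfτ : Irrational f.translationNumber)
    (hga : AnalyticOnNhd ℝ g univ) (hfg : Commute f g) {k j : ℤ}
    (hτ : g.translationNumber - k * f.translationNumber = j) :
    ∃ m n : ℕ, (n : ℤ) - m = k ∧ ∀ x, (f ^ m) (g x) = (f ^ n) x + j := by
  set m := (-k).toNat
  set n := k.toNat
  have hmn : (n : ℤ) - m = k := by omega
  refine ⟨m, n, hmn, ?_⟩
  have hu : Commute f (f ^ m * g) := ((Commute.refl f).pow_right m).mul_right hfg
  have hua : AnalyticOnNhd ℝ ⇑(f ^ m * g) univ := by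
    rw [coe_mul]
    exact (analyticOnNhd_pow hfa m).comp hga (mapsTo_univ _ _)
  have hτu : (f ^ m * g).translationNumber = (f ^ n).translationNumber + j := by
    have hmn' : (n : ℝ) - m = k := by exact_mod_cast hmn
    rw [translationNumber_mul_of_commute (hfg.pow_left m), translationNumber_pow,
      translationNumber_pow, ← hτ, ← hmn']
    ring
  obtain ⟨x₀, hx₀⟩ :=
    exists_apply_eq_add_int_of_commute hua.continuous (hf.pow n) (hu.pow_left n).symm hτu
  exact apply_eq_add_int_of_commute_of_analyticOnNhd hfτ hu ((Commute.refl f).pow_right n) hua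
    (analyticOnNhd_pow hfa n) hx₀

end CircleDeg1Lift

theorem S_map_add_one (a b x : ℝ) : S a b (x + 1) = S a b x + 1 := by
  simp only [S, mul_add, mul_one, sin_add_two_pi]
  ring

theorem S_strictMono {a b : ℝ} (hb : |b| < 1 / (2 * π)) : StrictMono (S a b) := by
  have hb' : 2 * π * |b| < 1 := by rwa [lt_div_iff₀' (by positivity)] at hb
  intro x y hxy
  have hsin : |b * (sin (2 * π * y) - sin (2 * π * x))| ≤ 2 * π * |b| * (y - x) :=
    calc |b * (sin (2 * π * y) - sin (2 * π * x))|
        ≤ |b| * |2 * π * y - 2 * π * x| := by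
          rw [abs_mul]; exact mul_le_mul_of_nonneg_left (abs_sin_sub_sin_le _ _) (abs_nonneg b)
      _ = 2 * π * |b| * (y - x) := by
          rw [← mul_sub, abs_mul, abs_of_pos (by positivity : (0 : ℝ) < 2 * π),
            abs_of_pos (sub_pos.2 hxy)]
          ring
  have hlower := (abs_le.1 hsin).1
  simp only [S]
  nlinarith

theorem analyticOnNhd_S (a b : ℝ) : AnalyticOnNhd ℝ (S a b) univ := fun x _ => by
  unfold S
  fun_prop

/-- Suppose `ρ(S_{a,b})` is irrational and `g : ℝ → ℝ` is a real-analytic, strictly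
increasing lift of a circle map commuting with `S_{a,b}` modulo `ℤ`, whose rotation
number satisfies `ρ(g) − k·ρ(S_{a,b}) ∈ ℤ` for some `k ∈ ℤ`. Then the circle map
induced by `g` equals the `k`-th iterate of the circle map induced by `S_{a,b}`. -/
theorem circle_germ_with_rotation_is_iterate (a b : ℝ)
    (hb : b ∈ Set.Ioo (0 : ℝ) (1 / (2 * Real.pi)))
    (ρS : ℝ) (hρS : Tendsto (fun n : ℕ => (S a b)^[n] 0 / (n : ℝ)) atTop (𝓝 ρS))
    (hirr : Irrational ρS)
    (g : ℝ → ℝ) (hg : ∀ x : ℝ, AnalyticAt ℝ g x) (hmono : StrictMono g)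
    (hper : ∀ x : ℝ, g (x + 1) = g x + 1)
    (hcomm : ∀ x : ℝ, ∃ j : ℤ, g (S a b x) - S a b (g x) = (j : ℝ))
    (ρg : ℝ) (hρg : Tendsto (fun n : ℕ => g^[n] 0 / (n : ℝ)) atTop (𝓝 ρg))
    (k : ℤ) (hk : ∃ j₀ : ℤ, ρg - (k : ℝ) * ρS = (j₀ : ℝ)) :
    ∃ m n : ℕ, (n : ℤ) - (m : ℤ) = k ∧
      ∃ j : ℤ, ∀ x : ℝ, (S a b)^[m] (g x) = (S a b)^[n] x + (j : ℝ) := by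
  have hS : StrictMono (S a b) := S_strictMono (by rw [abs_of_pos hb.1]; exact hb.2)
  let F : CircleDeg1Lift := ⟨⟨S a b, hS.monotone⟩, S_map_add_one a b⟩
  let G : CircleDeg1Lift := ⟨⟨g, hmono.monotone⟩, hper⟩
  have hFa : AnalyticOnNhd ℝ F univ := analyticOnNhd_S a b
  have hGa : AnalyticOnNhd ℝ G univ := fun x _ => hg x
  have hFG : Commute F G := by
    obtain ⟨j, hj⟩ := hcomm 0
    refine (CircleDeg1Lift.commute_of_apply_eq_add_int (j := j) fun x => ?_).symm
    have hdefect := ((hGa.continuous.comp hFa.continuous).sub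
      (hFa.continuous.comp hGa.continuous)).apply_eq_apply_of_forall_exists_int hcomm x 0
    change g (S a b x) - S a b (g x) = g (S a b 0) - S a b (g 0) at hdefect
    change g (S a b x) = S a b (g x) + j
    linarith
  have hτF : F.translationNumber = ρS := F.translationNumber_eq_of_tendsto₀ hρS
  have hτG : G.translationNumber = ρg := G.translationNumber_eq_of_tendsto₀ hρg
  obtain ⟨j, hj⟩ := hk
  obtain ⟨m, n, hmn, h⟩ := CircleDeg1Lift.exists_pow_mul_apply_eq_pow_apply_add_int
    (CircleDeg1Lift.isUnit_of_continuous_of_injective hFa.continuous hS.injective) hFa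
    (hτF ▸ hirr) hGa hFG (by rw [hτF, hτG]; exact hj)
  refine ⟨m, n, hmn, j, fun x => ?_⟩
  have hx := h x
  rwa [CircleDeg1Lift.coe_pow, CircleDeg1Lift.coe_pow] at hx
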